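/- Let A be a generic arrangement of at least n+1 hyperplanes in P^n and f = Q(A) its defining polynomial (the product of its defining linear forms). Then the initial degree of the apolar ideal satisfies α(Ann_R(f)) ≥ min{|A| − n + 1, n + 1}, where |A| is the number of hyperplanes. -/

import Mathlib

open MvPolynomial

/-- The apolar action: `apol Φ f = Φ(∂/∂x₀,…,∂/∂xₙ) f`. -/
noncomputable def apol {σ K : Type*} [CommRing K] (Φ f : MvPolynomial σ K) :
    MvPolynomial σ K :=
  (AddMonoidAlgebra.coeff Φ).sum fun m c =>
    (AddMonoidAlgebra.coeff f).sum fun n b =>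
      if ∀ i ∈ m.support, m i ≤ n i then
        monomial (n - m) (c * b * ∏ i ∈ m.support, (Nat.descFactorial (n i) (m i) : K))
      else 0

/-!
Let `ℓⱼ` be the linear forms of the arrangement and `D` a form of degree `d ≤ n` with
`D ∘ ∏ⱼ ℓⱼ = 0`. Iterating the Leibniz rule `D ∘ (ℓ g) = ℓ (D ∘ g) + (∂_ℓ D) ∘ g` expands
`D ∘ ∏ⱼ ℓⱼ` as `∑_S c_S ∏_{j ∉ S} ℓⱼ` over the `d`-subsets `S`, where the scalar `c_S` is the
contraction of `D` by `∏_{j ∈ S} ℓⱼ`. Genericity gives a point lying on exactly the hyperplanes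
indexed by `S`, and evaluating there shows `c_S = 0`.

If all these contractions vanish for the `d`-subsets of at least `n + d` forms, then `D = 0`: by
induction on `d` every `∂_{ℓⱼ} D` vanishes; any `n + 1` of the `ℓⱼ` span the space of linear forms,
so all partial derivatives of `D` vanish, and Euler's identity forces `D = 0`.
-/

section ApolarAction

variable {σ K : Type*} [CommRing K]

lemma prod_descFactorial_eq_zero_of_not_le {m n : σ →₀ ℕ} (h : ¬ m ≤ n) :
    ∏ i ∈ m.support, ((n i).descFactorial (m i) : K) = 0 := by
  obtain ⟨i, hi⟩ := not_forall.mp (mt Finsupp.le_def.mpr h)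
  have hmi : m i ≠ 0 := fun h0 => hi (by rw [h0]; exact Nat.zero_le _)
  refine Finset.prod_eq_zero (Finsupp.mem_support_iff.mpr hmi) ?_
  rw [Nat.descFactorial_of_lt (not_le.mp hi), Nat.cast_zero]

lemma prod_descFactorial_eq_of_support_subset {m : σ →₀ ℕ} {s : Finset σ} (n : σ →₀ ℕ)
    (h : m.support ⊆ s) :
    ∏ i ∈ m.support, ((n i).descFactorial (m i) : K) = ∏ i ∈ s, ((n i).descFactorial (m i) : K) :=
  Finset.prod_subset h fun i _ hi => by simp [Finsupp.notMem_support_iff.mp hi]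

lemma apol_eq_finsupp_sum (Φ f : MvPolynomial σ K) :
    apol Φ f = (AddMonoidAlgebra.coeff Φ).sum fun m c => (AddMonoidAlgebra.coeff f).sum fun n b =>
      monomial (n - m) (c * b * ∏ i ∈ m.support, ((n i).descFactorial (m i) : K)) := by
  refine Finsupp.sum_congr fun m _ => Finsupp.sum_congr fun n _ => ?_
  split_ifs with h
  · rfl
  · have hmn : ¬ m ≤ n := fun hle => h fun i _ => hle i
    rw [prod_descFactorial_eq_zero_of_not_le hmn, mul_zero, map_zero]

lemma apol_monomial_monomial (m n : σ →₀ ℕ) (c b : K) :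
    apol (monomial m c) (monomial n b)
      = monomial (n - m) (c * b * ∏ i ∈ m.support, ((n i).descFactorial (m i) : K)) := by
  rw [apol_eq_finsupp_sum, sum_monomial_eq (by simp [Finsupp.sum]), sum_monomial_eq (by simp)]

lemma apol_monomial_monomial_of_not_le {m n : σ →₀ ℕ} (h : ¬ m ≤ n) (c b : K) :
    apol (monomial m c) (monomial n b) = 0 := by
  rw [apol_monomial_monomial, prod_descFactorial_eq_zero_of_not_le h, mul_zero, map_zero]

lemma apol_add_left (Φ Ψ f : MvPolynomial σ K) : apol (Φ + Ψ) f = apol Φ f + apol Ψ f := by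
  rw [apol_eq_finsupp_sum, apol_eq_finsupp_sum, apol_eq_finsupp_sum, AddMonoidAlgebra.coeff_add,
    Finsupp.sum_add_index' (fun _ => by simp [Finsupp.sum])]
  intro m c₁ c₂
  rw [← Finsupp.sum_add]
  exact Finsupp.sum_congr fun n _ => by rw [← map_add, add_mul, add_mul]

lemma apol_add_right (Φ f g : MvPolynomial σ K) : apol Φ (f + g) = apol Φ f + apol Φ g := by
  rw [apol_eq_finsupp_sum, apol_eq_finsupp_sum, apol_eq_finsupp_sum, ← Finsupp.sum_add]
  refine Finsupp.sum_congr fun m _ => ?_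
  rw [AddMonoidAlgebra.coeff_add, Finsupp.sum_add_index' (fun _ => by simp)]
  intro n b₁ b₂
  rw [← map_add, mul_add, add_mul]

lemma apol_zero_left (f : MvPolynomial σ K) : apol 0 f = 0 :=
  Finsupp.sum_zero_index

lemma apol_sum_left {ι : Type*} (s : Finset ι) (Φ : ι → MvPolynomial σ K) (f : MvPolynomial σ K) :
    apol (∑ i ∈ s, Φ i) f = ∑ i ∈ s, apol (Φ i) f :=
  map_sum (AddMonoidHom.mk' (apol · f) fun Φ Ψ => apol_add_left Φ Ψ f) Φ s

lemma apol_sum_right {ι : Type*} (s : Finset ι) (Φ : MvPolynomial σ K) (f : ι → MvPolynomial σ K) :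
    apol Φ (∑ i ∈ s, f i) = ∑ i ∈ s, apol Φ (f i) :=
  map_sum (AddMonoidHom.mk' (apol Φ) (apol_add_right Φ)) f s

lemma apol_C_left (c : K) (f : MvPolynomial σ K) : apol (C c) f = c • f := by
  induction f using MvPolynomial.induction_on' with
  | monomial n b => simp [← monomial_zero', apol_monomial_monomial, smul_monomial]
  | add p q hp hq => rw [apol_add_right, hp, hq, smul_add]

lemma apol_one_left (f : MvPolynomial σ K) : apol 1 f = f := by
  rw [← C_1, apol_C_left, one_smul]

lemma apol_X_left (i : σ) (f : MvPolynomial σ K) : apol (X i) f = pderiv i f := by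
  induction f using MvPolynomial.induction_on' with
  | monomial n b =>
    rw [X, apol_monomial_monomial, pderiv_monomial, Finsupp.support_single i one_ne_zero]
    simp
  | add p q hp hq => rw [apol_add_right, hp, hq, map_add]

lemma apol_mul (Φ Ψ f : MvPolynomial σ K) : apol (Φ * Ψ) f = apol Φ (apol Ψ f) := by
  classical
  induction Φ using MvPolynomial.induction_on' with
  | add p q hp hq => rw [add_mul, apol_add_left, apol_add_left, hp, hq]
  | monomial m c =>
  induction Ψ using MvPolynomial.induction_on' with
  | add p q hp hq => rw [mul_add, apol_add_left, hp, hq, apol_add_left, apol_add_right]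
  | monomial m' c' =>
  induction f using MvPolynomial.induction_on' with
  | add p q hp hq => rw [apol_add_right, apol_add_right, apol_add_right, hp, hq]
  | monomial n b =>
  rw [monomial_mul, apol_monomial_monomial, apol_monomial_monomial, apol_monomial_monomial,
    tsub_tsub, add_comm m' m]
  congr 1
  set s := m.support ∪ m'.support
  have hfactor : ∏ i ∈ s, ((n i).descFactorial ((m + m') i) : K)
      = (∏ i ∈ s, ((n i).descFactorial (m' i) : K))
        * ∏ i ∈ s, (((n - m') i).descFactorial (m i) : K) := by
    rw [← Finset.prod_mul_distrib]
    refine Finset.prod_congr rfl fun i _ => ?_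
    rw [Finsupp.add_apply, Finsupp.tsub_apply, mul_comm, ← Nat.cast_mul,
      ← Nat.add_sub_cancel (m i) (m' i), Nat.descFactorial_mul_descFactorial le_add_self,
      Nat.add_sub_cancel]
  rw [prod_descFactorial_eq_of_support_subset n Finsupp.support_add,
    prod_descFactorial_eq_of_support_subset n (Finset.subset_union_right (s₁ := m.support)),
    prod_descFactorial_eq_of_support_subset (n - m') (Finset.subset_union_left (s₂ := m'.support)),
    hfactor]
  ring

lemma apol_smul_left (c : K) (Φ f : MvPolynomial σ K) : apol (c • Φ) f = c • apol Φ f := by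
  rw [smul_eq_C_mul, apol_mul, apol_C_left]

lemma apol_smul_right (c : K) (Φ f : MvPolynomial σ K) : apol Φ (c • f) = c • apol Φ f := by
  rw [← apol_C_left, ← apol_mul, mul_comm, apol_mul, apol_C_left]

lemma apol_one_right (Φ : MvPolynomial σ K) : apol Φ 1 = C (constantCoeff Φ) := by
  classical
  induction Φ using MvPolynomial.induction_on' with
  | monomial m c =>
    rcases eq_or_ne m 0 with rfl | hm
    · rw [one_def, apol_monomial_monomial]
      simp
    · have hle : ¬ m ≤ 0 := fun h => hm (le_zero_iff.mp h)
      rw [one_def, apol_monomial_monomial_of_not_le hle, constantCoeff_monomial, if_neg hm,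
        map_zero]
  | add p q hp hq => rw [apol_add_left, hp, hq, map_add, map_add]

lemma isHomogeneous_apol_monomial_monomial (m n : σ →₀ ℕ) (c b : K) :
    (apol (monomial m c) (monomial n b)).IsHomogeneous (n.degree - m.degree) := by
  by_cases h : m ≤ n
  · rw [apol_monomial_monomial]
    refine isHomogeneous_monomial _ ?_
    rw [← tsub_add_cancel_of_le h, map_add, Nat.add_sub_cancel, tsub_add_cancel_of_le h]
  · rw [apol_monomial_monomial_of_not_le h]
    exact isHomogeneous_zero _ _ _

lemma apol_monomial_monomial_of_degree_lt {m n : σ →₀ ℕ} (h : n.degree < m.degree) (c b : K) :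
    apol (monomial m c) (monomial n b) = 0 :=
  apol_monomial_monomial_of_not_le (fun hle => (Finsupp.degree_mono hle).not_gt h) c b

lemma apol_eq_sum_apol_monomial (Φ f : MvPolynomial σ K) :
    apol Φ f = ∑ m ∈ Φ.support, ∑ n ∈ f.support,
      apol (monomial m (coeff m Φ)) (monomial n (coeff n f)) := by
  conv_lhs => rw [Φ.as_sum, f.as_sum]
  rw [apol_sum_left]
  exact Finset.sum_congr rfl fun m _ => apol_sum_right _ _ _

lemma MvPolynomial.IsHomogeneous.degree_eq_of_mem_support {Φ : MvPolynomial σ K} {e : ℕ}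
    (hΦ : Φ.IsHomogeneous e) {m : σ →₀ ℕ} (hm : m ∈ Φ.support) : m.degree = e := by
  by_contra h
  exact mem_support_iff.mp hm (hΦ.coeff_eq_zero h)

lemma isHomogeneous_apol {Φ f : MvPolynomial σ K} {e d : ℕ} (hΦ : Φ.IsHomogeneous e)
    (hf : f.IsHomogeneous d) : (apol Φ f).IsHomogeneous (d - e) := by
  rw [apol_eq_sum_apol_monomial]
  refine IsHomogeneous.sum _ _ _ fun m hm => IsHomogeneous.sum _ _ _ fun n hn => ?_
  rw [← hΦ.degree_eq_of_mem_support hm, ← hf.degree_eq_of_mem_support hn]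
  exact isHomogeneous_apol_monomial_monomial _ _ _ _

lemma apol_eq_zero_of_lt {Φ f : MvPolynomial σ K} {e d : ℕ} (hΦ : Φ.IsHomogeneous e)
    (hf : f.IsHomogeneous d) (h : d < e) : apol Φ f = 0 := by
  rw [apol_eq_sum_apol_monomial]
  refine Finset.sum_eq_zero fun m hm => Finset.sum_eq_zero fun n hn => ?_
  refine apol_monomial_monomial_of_degree_lt ?_ _ _
  rwa [hΦ.degree_eq_of_mem_support hm, hf.degree_eq_of_mem_support hn]

lemma constantCoeff_apol_eq_zero_of_ne {Φ f : MvPolynomial σ K} {e d : ℕ}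
    (hΦ : Φ.IsHomogeneous e) (hf : f.IsHomogeneous d) (h : e ≠ d) :
    constantCoeff (apol Φ f) = 0 := by
  rcases lt_or_gt_of_ne h with hlt | hlt
  · rw [constantCoeff_eq]
    exact (isHomogeneous_apol hΦ hf).coeff_eq_zero (by rw [map_zero]; omega)
  · rw [apol_eq_zero_of_lt hΦ hf hlt, map_zero]

end ApolarAction

section LinearForm

variable {σ K : Type*} [CommRing K] [Fintype σ]

noncomputable def linearForm : (σ → K) →ₗ[K] MvPolynomial σ K :=
  Fintype.linearCombination K X

lemma linearForm_apply (v : σ → K) : linearForm v = ∑ i, v i • X i := rfl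

lemma isHomogeneous_linearForm (v : σ → K) : (linearForm v).IsHomogeneous 1 :=
  IsHomogeneous.sum _ _ _ fun i _ => by
    simpa [smul_eq_C_mul] using (isHomogeneous_C σ (v i)).mul (isHomogeneous_X K i)

lemma isHomogeneous_prod_linearForm {ι : Type*} (w : ι → σ → K) (S : Finset ι) :
    (∏ j ∈ S, linearForm (w j)).IsHomogeneous S.card := by
  simpa using IsHomogeneous.prod S _ (fun _ => 1) fun j _ => isHomogeneous_linearForm (w j)

lemma eval_linearForm (x v : σ → K) : eval x (linearForm v) = v ⬝ᵥ x := by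
  simp [linearForm_apply, dotProduct, smul_eq_C_mul]

lemma pderiv_linearForm [DecidableEq σ] (i : σ) (v : σ → K) :
    pderiv i (linearForm v) = C (v i) := by
  simp [linearForm_apply, map_sum, pderiv_X, Pi.single_apply, smul_eq_C_mul]

lemma apol_linearForm (v : σ → K) (f : MvPolynomial σ K) :
    apol (linearForm v) f = ∑ i, v i • pderiv i f := by
  simp only [linearForm_apply, apol_sum_left, apol_smul_left, apol_X_left]

lemma apol_linearForm_mul_X (v : σ → K) (p : MvPolynomial σ K) (i : σ) :
    apol (linearForm v) (p * X i) = apol (linearForm v) p * X i + v i • p := by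
  classical
  simp only [apol_linearForm, Derivation.leibniz, pderiv_X, smul_add, Finset.sum_add_distrib,
    Finset.sum_mul, smul_eq_mul, Pi.single_apply]
  simp [mul_comm, add_comm]

lemma apol_linearForm_mul (v : σ → K) (D g : MvPolynomial σ K) :
    apol D (linearForm v * g) = linearForm v * apol D g + apol (apol (linearForm v) D) g := by
  classical
  induction D using MvPolynomial.induction_on generalizing g with
  | C c => simp [apol_C_left, apol_linearForm, apol_zero_left]
  | add p q hp hq =>
    rw [apol_add_left, apol_add_left, hp, hq, apol_add_right, apol_add_left, mul_add]
    abel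
  | mul_X p i hp =>
    rw [apol_mul, apol_X_left, pderiv_mul, pderiv_linearForm, apol_add_right, ← smul_eq_C_mul,
      apol_smul_right, hp, apol_linearForm_mul_X, apol_add_left, apol_mul, apol_X_left,
      apol_smul_left, apol_mul, apol_X_left]
    abel

lemma apol_prod_linearForm {ι : Type*} [DecidableEq ι] (w : ι → σ → K) (J : Finset ι)
    (D : MvPolynomial σ K) :
    apol D (∏ j ∈ J, linearForm (w j)) = ∑ S ∈ J.powerset,
      (∏ j ∈ J \ S, linearForm (w j)) * C (constantCoeff (apol (∏ j ∈ S, linearForm (w j)) D)) := by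
  induction J using Finset.induction_on generalizing D with
  | empty => simp [apol_one_right, apol_one_left]
  | @insert j₀ J hj₀ ih =>
    rw [Finset.prod_insert hj₀, apol_linearForm_mul, ih, ih, Finset.sum_powerset_insert hj₀,
      Finset.mul_sum]
    congr 1
    · refine Finset.sum_congr rfl fun S hS => ?_
      have hj₀S : j₀ ∉ S := fun h => hj₀ (Finset.mem_powerset.mp hS h)
      rw [Finset.insert_sdiff_of_notMem _ hj₀S,
        Finset.prod_insert fun h => hj₀ (Finset.mem_sdiff.mp h).1, mul_assoc]
    · refine Finset.sum_congr rfl fun S hS => ?_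
      have hj₀S : j₀ ∉ S := fun h => hj₀ (Finset.mem_powerset.mp hS h)
      rw [Finset.insert_sdiff_insert, Finset.sdiff_insert_of_notMem hj₀, Finset.prod_insert hj₀S,
        mul_comm (linearForm (w j₀)), apol_mul]

end LinearForm

section Field

variable {K : Type*} [Field K]

lemma MvPolynomial.IsHomogeneous.eq_zero_of_forall_pderiv_eq_zero [CharZero K] {σ : Type*}
    [Fintype σ] {D : MvPolynomial σ K} {d : ℕ} (hD : D.IsHomogeneous d) (hd : d ≠ 0)
    (h : ∀ i, pderiv i D = 0) : D = 0 := by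
  have euler := hD.sum_X_mul_pderiv
  simpa [h, hd] using euler.symm

lemma pderiv_eq_zero_of_apol_linearForm_eq_zero {σ : Type*} [Fintype σ] {V : Set (σ → K)}
    (hV : Submodule.span K V = ⊤) {D : MvPolynomial σ K}
    (h : ∀ v ∈ V, apol (linearForm v) D = 0) (i : σ) : pderiv i D = 0 := by
  classical
  let L := Fintype.linearCombination K fun i => pderiv i D
  have hL : ∀ v, L v = apol (linearForm v) D := fun v => (apol_linearForm v D).symm
  have hker : Submodule.span K V ≤ LinearMap.ker L :=
    Submodule.span_le.mpr fun v hv => by simp [hL, h v hv]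
  have hsingle : L (Pi.single i 1) = 0 := hker (hV ▸ Submodule.mem_top)
  simpa [L] using hsingle

-- A vector space over an infinite field is not a finite union of proper subspaces.
lemma Submodule.exists_dual_le_ker_forall_apply_ne_zero [Infinite K] {V ι : Type*}
    [AddCommGroup V] [Module K V] [Finite ι] (p : Submodule K V) (v : ι → V)
    (hv : ∀ i, v i ∉ p) : ∃ f : Module.Dual K V, p ≤ LinearMap.ker f ∧ ∀ i, f (v i) ≠ 0 := by
  classical
  have := Fintype.ofFinite ι
  let M := p.dualAnnihilator
  let q : ι → Submodule K M := fun i => LinearMap.ker ((Module.Dual.eval K V (v i)).comp M.subtype)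
  have hq : ∀ i, q i ≠ ⊤ := by
    intro i htop
    obtain ⟨f, hfv, hpf⟩ := Submodule.exists_le_ker_of_notMem (hv i)
    have hf : f ∈ M := (Submodule.mem_dualAnnihilator f).mpr fun w hw => hpf hw
    have hfq : (⟨f, hf⟩ : M) ∈ q i := htop ▸ Submodule.mem_top
    exact hfv (by simpa [q] using hfq)
  obtain ⟨⟨f, hf⟩, -, hfq⟩ := Set.exists_of_ssubset
    (Submodule.iUnion_ssubset_of_forall_ne_top_of_card_lt (K := K) (M := M) Finset.univ q hq
      (by simp))
  refine ⟨f, fun w hw => (Submodule.mem_dualAnnihilator f).mp hf w hw, fun i hi => hfq ?_⟩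
  exact Set.mem_biUnion (Finset.mem_coe.mpr (Finset.mem_univ i)) (by simpa [q] using hi)

variable {n : ℕ} {ι : Type*}

-- `a j` is the normal vector of the `j`-th hyperplane of an arrangement in `ℙⁿ`: any `k` of the
-- hyperplanes meet in codimension `min k (n + 1)` exactly when any `k` normals span that dimension.
def IsGenericArrangement (a : ι → Fin (n + 1) → K) : Prop :=
  ∀ s : Finset ι, Module.finrank K (Submodule.span K (a '' ↑s)) = min s.card (n + 1)

namespace IsGenericArrangement

variable {a : ι → Fin (n + 1) → K}

lemma span_eq_top (ha : IsGenericArrangement a) {s : Finset ι} (hs : n + 1 ≤ s.card) :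
    Submodule.span K (a '' ↑s) = ⊤ :=
  Submodule.eq_top_of_finrank_eq (by rw [ha s, min_eq_right hs, Module.finrank_fin_fun])

lemma notMem_span [DecidableEq ι] (ha : IsGenericArrangement a) {s : Finset ι} (hs : s.card ≤ n)
    {k : ι} (hk : k ∉ s) : a k ∉ Submodule.span K (a '' ↑s) := by
  intro hmem
  have hrank := ha (insert k s)
  rw [Finset.coe_insert, Set.image_insert_eq, Submodule.span_insert_eq_span hmem, ha s,
    Finset.card_insert_of_notMem hk] at hrank
  omega

lemma exists_dotProduct_eq_zero_iff_mem [Infinite K] [Finite ι] (ha : IsGenericArrangement a)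
    (T : Finset ι) (hT : T.card ≤ n) : ∃ x : Fin (n + 1) → K, ∀ j, a j ⬝ᵥ x = 0 ↔ j ∈ T := by
  classical
  obtain ⟨f, hTf, hf⟩ := Submodule.exists_dual_le_ker_forall_apply_ne_zero
    (Submodule.span K (a '' ↑T)) (fun k : {k // k ∉ T} => a k) fun k => ha.notMem_span hT k.2
  let x := (dotProductEquiv K (Fin (n + 1))).symm f
  have hfx : ∀ j, a j ⬝ᵥ x = f (a j) := fun j => by
    rw [dotProduct_comm, ← dotProductEquiv_apply_apply, LinearEquiv.apply_symm_apply]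
  refine ⟨x, fun j => ⟨fun hj => ?_, fun hj => ?_⟩⟩
  · by_contra hjT
    exact hf ⟨j, hjT⟩ (by rw [← hfx]; exact hj)
  · rw [hfx]
    exact hTf (Submodule.subset_span (Set.mem_image_of_mem a hj))

variable [CharZero K] [DecidableEq ι]

lemma eq_zero_of_constantCoeff_apol_prod_eq_zero (ha : IsGenericArrangement a) {d : ℕ}
    {T : Finset ι} (hd : d ≤ T.card - n) {D : MvPolynomial (Fin (n + 1)) K}
    (hD : D.IsHomogeneous d)
    (h : ∀ S ⊆ T, S.card = d → constantCoeff (apol (∏ j ∈ S, linearForm (a j)) D) = 0) :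
    D = 0 := by
  induction d generalizing T D with
  | zero =>
    have h0 := h ∅ (Finset.empty_subset T) Finset.card_empty
    rw [Finset.prod_empty, apol_one_left] at h0
    ext m
    rcases eq_or_ne m 0 with rfl | hm
    · simpa [← constantCoeff_eq] using h0
    · exact hD.coeff_eq_zero (by simpa [Finsupp.degree_eq_zero_iff] using hm)
  | succ d ih =>
    have hderiv : ∀ j ∈ T, apol (linearForm (a j)) D = 0 := by
      intro j hj
      refine ih (T := T.erase j) (by rw [Finset.card_erase_of_mem hj]; omega)
        (isHomogeneous_apol (isHomogeneous_linearForm _) hD) fun S hS hSd => ?_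
      have hjS : j ∉ S := fun hjS => Finset.notMem_erase j T (hS hjS)
      rw [← apol_mul, mul_comm, ← Finset.prod_insert (f := fun j => linearForm (a j)) hjS]
      exact h _ (Finset.insert_subset hj (hS.trans (Finset.erase_subset j T)))
        (by rw [Finset.card_insert_of_notMem hjS, hSd])
    obtain ⟨s, hsT, hs⟩ := Finset.exists_subset_card_eq (s := T) (n := n + 1) (by omega)
    refine hD.eq_zero_of_forall_pderiv_eq_zero d.succ_ne_zero
      (pderiv_eq_zero_of_apol_linearForm_eq_zero (ha.span_eq_top hs.ge) ?_)
    rintro _ ⟨j, hj, rfl⟩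
    exact hderiv j (hsT hj)

-- Evaluating the expansion `apol_prod_linearForm` at a point lying on exactly the hyperplanes
-- indexed by `S` isolates the term indexed by `S`.
lemma eq_zero_of_apol_prod_eq_zero [Finite ι] (ha : IsGenericArrangement a) {d : ℕ} (hdn : d ≤ n)
    {T : Finset ι} (hd : d ≤ T.card - n) {D : MvPolynomial (Fin (n + 1)) K}
    (hD : D.IsHomogeneous d) (h : apol D (∏ j ∈ T, linearForm (a j)) = 0) : D = 0 := by
  refine ha.eq_zero_of_constantCoeff_apol_prod_eq_zero hd hD fun S hST hS => ?_
  obtain ⟨x, hx⟩ := ha.exists_dotProduct_eq_zero_iff_mem S (hS ▸ hdn)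
  have hexp := congrArg (eval x) (apol_prod_linearForm a T D)
  rw [h, map_zero, map_sum, Finset.sum_eq_single_of_mem S (Finset.mem_powerset.mpr hST)] at hexp
  · rw [map_mul, eval_C, map_prod] at hexp
    refine (mul_eq_zero.mp hexp.symm).resolve_left (Finset.prod_ne_zero_iff.mpr fun j hj => ?_)
    rw [eval_linearForm, Ne, hx]
    exact (Finset.mem_sdiff.mp hj).2
  · intro S' _ hS'S
    by_cases hcard : S'.card = d
    · obtain ⟨j, hjS, hjS'⟩ := Finset.not_subset.mp fun hsub =>
        hS'S (Finset.eq_of_subset_of_card_le hsub (by omega)).symm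
      rw [map_mul, map_prod, Finset.prod_eq_zero (Finset.mem_sdiff.mpr ⟨hST hjS, hjS'⟩)
        (by rw [eval_linearForm, hx]; exact hjS), zero_mul]
    · rw [constantCoeff_apol_eq_zero_of_ne (isHomogeneous_prod_linearForm a S') hD hcard,
        map_zero, mul_zero, map_zero]

end IsGenericArrangement

end Field

theorem stmt10_general (K : Type*) [Field K] [CharZero K] (n r : ℕ)
    (a : Fin r → Fin (n + 1) → K)
    (hgen : ∀ s : Finset (Fin r),
      Module.finrank K (Submodule.span K (a '' ↑s)) = min s.card (n + 1)) :
    ∀ d < min (r - n + 1) (n + 1), ∀ D : MvPolynomial (Fin (n + 1)) K,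
      D.IsHomogeneous d → apol D (∏ j, ∑ i, C (a j i) * X i) = 0 → D = 0 := by
  intro d hd D hD h
  have hprod : ∏ j, ∑ i, C (a j i) * X i = ∏ j ∈ Finset.univ, linearForm (a j) := by
    simp only [linearForm_apply, smul_eq_C_mul]
  rw [lt_min_iff] at hd
  exact IsGenericArrangement.eq_zero_of_apol_prod_eq_zero hgen (by omega)
    (by rw [Finset.card_univ, Fintype.card_fin]; omega) hD (hprod ▸ h)

/-- Initial degree bound for the apolar ideal of a generic arrangement of at least
`n+1` hyperplanes in `ℙⁿ`: `α(Ann(f)) ≥ min(|A| - n + 1, n + 1)`, i.e. all graded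
components of the apolar ideal in degrees below this bound vanish. -/
theorem stmt10 (K : Type*) [Field K] [CharZero K] [IsAlgClosed K] (n r : ℕ)
    (hr : n + 1 ≤ r) (a : Fin r → Fin (n + 1) → K) (ha : ∀ j, a j ≠ 0)
    (hdist : ∀ j j' : Fin r, j ≠ j' → ∀ c : K, a j ≠ c • a j')
    (hgen : ∀ s : Finset (Fin r),
      Module.finrank K (Submodule.span K (a '' ↑s)) = min s.card (n + 1)) :
    ∀ d < min (r - n + 1) (n + 1), ∀ D : MvPolynomial (Fin (n + 1)) K,
      D.IsHomogeneous d → apol D (∏ j, ∑ i, C (a j i) * X i) = 0 → D = 0 :=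
  stmt10_general K n r a hgen
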